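/- Let (S(i)) be the Bernoulli(p) walk started at 0 and T_n = #{1 ≤ i ≤ n : S(i) = 0}. Then for even n and 0 ≤ k ≤ n/2: P_0{T_n = k} = (2pq)^k [1 + ∑_{m=1}^{n/2 - k} ((2m+k-2)!/(m! (m+k)!)) (k² - k - 2m) (pq)^m]; and for odd n, P_0{T_n = k} = P_0{T_{n-1} = k}. -/

import Mathlib

open Finset

noncomputable section

/-- Step value of the Bernoulli walk: `+1` for `true`, `-1` for `false`. -/
def stepVal (b : Bool) : ℤ := if b then 1 else -1

/-- Position at time `i` of the walk started at `x` with step sequence `ε`. -/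
def walkFn (x : ℤ) (ε : ℕ → Bool) (i : ℕ) : ℤ :=
  x + ∑ k ∈ Finset.range i, stepVal (ε k)

/-- Extend a finite sequence by a default value. -/
def extendF {n : ℕ} {α : Type*} (d : α) (ε : Fin n → α) : ℕ → α :=
  fun k => if h : k < n then ε ⟨k, h⟩ else d

/-- Weight of a single step: `p` for `+1`, `1-p` for `-1`. -/
def wt (p : ℝ) (b : Bool) : ℝ := if b then p else 1 - p

open Classical in
/-- Probability, for the Bernoulli(p) walk started at `x`, of an event `P` on the path,
computed over the horizon `n` (the event should only depend on times `≤ n`). -/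
def walkProb (p : ℝ) (x : ℤ) (n : ℕ) (P : (ℕ → ℤ) → Prop) : ℝ :=
  ∑ ε : Fin n → Bool, if P (walkFn x (extendF false ε)) then ∏ k, wt p (ε k) else 0

end

/-- Local time at `0`: number of times `i ∈ {1,...,n}` with `S i = 0`. -/
def localCount (n : ℕ) (S : ℕ → ℤ) : ℕ :=
  ((Finset.Icc 1 n).filter (fun i => S i = 0)).card

-- basic walk lemmas
lemma walkFn_zero (x : ℤ) (ε : ℕ → Bool) : walkFn x ε 0 = x := by simp [walkFn]

lemma walkFn_succ (x : ℤ) (ε : ℕ → Bool) (i : ℕ) :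
    walkFn x ε (i+1) = walkFn x ε i + stepVal (ε i) := by
  simp [walkFn, Finset.sum_range_succ, add_assoc]

lemma walkFn_congr {x : ℤ} {ε ε' : ℕ → Bool} {i : ℕ} (h : ∀ k < i, ε k = ε' k) :
    walkFn x ε i = walkFn x ε' i := by
  unfold walkFn
  congr 1
  exact Finset.sum_congr rfl (fun k hk => by rw [h k (Finset.mem_range.1 hk)])

lemma walkFn_parity (ε : ℕ → Bool) (i : ℕ) : Even (walkFn 0 ε i + i) := by
  induction i with
  | zero => simp [walkFn_zero]
  | succ i ih =>
    rw [walkFn_succ]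
    have : walkFn 0 ε i + stepVal (ε i) + (i+1 : ℕ)
        = (walkFn 0 ε i + i) + (stepVal (ε i) + 1) := by push_cast; ring
    rw [this]
    refine ih.add ?_
    cases h : ε i <;> simp [stepVal] <;> decide

lemma walkFn_ne_zero_of_odd (ε : ℕ → Bool) {i : ℕ} (hi : Odd i) : walkFn 0 ε i ≠ 0 := by
  intro h
  have := walkFn_parity ε i
  rw [h, zero_add] at this
  have : Even (i : ℤ) := this
  rw [Int.even_coe_nat] at this
  exact (Nat.not_even_iff_odd.2 hi) this

-- discrete IVT: stays positive if never zero
lemma walkFn_pos_of_ne_zero {x : ℤ} {ε : ℕ → Bool} {j : ℕ} (hj : 0 < walkFn x ε j)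
    (t : ℕ) (hne : ∀ i, j < i → i ≤ t → walkFn x ε i ≠ 0) :
    ∀ i, j ≤ i → i ≤ t → 0 < walkFn x ε i := by
  intro i hji hit
  induction i with
  | zero => exact Nat.le_zero.1 hji ▸ hj
  | succ i ih =>
    rcases Nat.lt_or_ge j (i+1) with h | h
    · have hj_le : j ≤ i := Nat.lt_succ_iff.1 h
      have hpos : 0 < walkFn x ε i := ih hj_le (le_trans (Nat.le_succ i) hit)
      have hne' := hne (i+1) h hit
      have hstep := walkFn_succ x ε i
      have hs : stepVal (ε i) = 1 ∨ stepVal (ε i) = -1 := by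
        cases ε i <;> simp [stepVal]
      rcases hs with h1 | h1 <;> rw [h1] at hstep <;> omega
    · have : j = i + 1 := le_antisymm hji h
      exact this ▸ hj

-- walkProb basics
lemma wt_sum (p : ℝ) : wt p true + wt p false = 1 := by simp [wt]

lemma walkProb_congr {p : ℝ} {x : ℤ} {n : ℕ} {P Q : (ℕ → ℤ) → Prop}
    (h : ∀ S, P S ↔ Q S) : walkProb p x n P = walkProb p x n Q := by
  unfold walkProb
  refine Finset.sum_congr rfl (fun ε _ => ?_)
  congr 1
  · exact propext (h _)

lemma walkProb_total (p : ℝ) (x : ℤ) (n : ℕ) : walkProb p x n (fun _ => True) = 1 := by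
  unfold walkProb
  simp only [if_true]
  rw [← Fintype.prod_sum (fun (_ : Fin n) (b : Bool) => wt p b)]
  simp [wt]

lemma walkProb_of_false {p : ℝ} {x : ℤ} {n : ℕ} {P : (ℕ → ℤ) → Prop}
    (h : ∀ ε : Fin n → Bool, ¬ P (walkFn x (extendF false ε))) : walkProb p x n P = 0 := by
  unfold walkProb
  exact Finset.sum_eq_zero (fun ε _ => by rw [if_neg (h ε)])

-- canonical classical indicator, to avoid Decidable-instance mismatches
noncomputable def ind (c : Prop) (w : ℝ) : ℝ := @ite _ c (Classical.propDecidable c) w 0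

lemma ind_pos {c : Prop} (h : c) (w : ℝ) : ind c w = w := by
  unfold ind
  exact if_pos h

lemma ind_neg {c : Prop} (h : ¬c) (w : ℝ) : ind c w = 0 := by
  unfold ind
  exact if_neg h

lemma ite_eq_ind {c : Prop} [Decidable c] (w : ℝ) : (if c then w else 0) = ind c w := by
  by_cases h : c
  · rw [if_pos h, ind_pos h]
  · rw [if_neg h, ind_neg h]

lemma walkProb_eq_ind (p : ℝ) (x : ℤ) (n : ℕ) (P : (ℕ → ℤ) → Prop) :
    walkProb p x n P
      = ∑ ε : Fin n → Bool, ind (P (walkFn x (extendF false ε))) (∏ k, wt p (ε k)) := by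
  classical
  unfold walkProb
  exact Finset.sum_congr rfl (fun ε _ => ite_eq_ind _)

-- joining step sequences
def joinEquiv (t u : ℕ) : ((Fin t → Bool) × (Fin u → Bool)) ≃ (Fin (t+u) → Bool) where
  toFun z := fun i => if h : (i : ℕ) < t then z.1 ⟨i, h⟩ else z.2 ⟨(i : ℕ) - t, by omega⟩
  invFun ε := (fun i => ε (Fin.castAdd u i), fun i => ε (Fin.natAdd t i))
  left_inv z := by
    obtain ⟨a, b⟩ := z
    simp only [Prod.mk.injEq]
    constructor
    · funext i
      rw [dif_pos (by simpa using i.isLt : ((Fin.castAdd u i : Fin (t+u)) : ℕ) < t)]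
      refine congrArg _ (Fin.ext ?_)
      simp
    · funext i
      rw [dif_neg (by simp : ¬ ((Fin.natAdd t i : Fin (t+u)) : ℕ) < t)]
      refine congrArg _ (Fin.ext ?_)
      simp
  right_inv ε := by
    funext i
    dsimp only
    by_cases h : (i : ℕ) < t
    · rw [dif_pos h]
      refine congrArg _ (Fin.ext ?_)
      simp
    · rw [dif_neg h]
      refine congrArg _ (Fin.ext ?_)
      simp
      omega

lemma joinEquiv_apply_lt {t u : ℕ} (a : Fin t → Bool) (b : Fin u → Bool) {k : ℕ}
    (hk : k < t) : extendF false (joinEquiv t u (a, b)) k = extendF false a k := by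
  unfold extendF
  rw [dif_pos (by omega : k < t + u), dif_pos hk]
  exact dif_pos hk

lemma joinEquiv_apply_shift {t u : ℕ} (a : Fin t → Bool) (b : Fin u → Bool) (k : ℕ) :
    extendF false (joinEquiv t u (a, b)) (t + k) = extendF false b k := by
  unfold extendF
  by_cases hk : k < u
  · rw [dif_pos (by omega : t + k < t + u), dif_pos hk]
    show joinEquiv t u (a, b) _ = b ⟨k, hk⟩
    rw [show (joinEquiv t u (a,b)) = (joinEquiv t u).toFun (a,b) from rfl]
    unfold joinEquiv
    simp only [Equiv.coe_fn_mk]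
    rw [dif_neg (by simp : ¬ ((⟨t+k, by omega⟩ : Fin (t+u)) : ℕ) < t)]
    refine congrArg _ (Fin.ext ?_)
    simp
  · rw [dif_neg (by omega : ¬ t + k < t + u), dif_neg hk]

lemma prod_wt_join (p : ℝ) {t u : ℕ} (a : Fin t → Bool) (b : Fin u → Bool) :
    ∏ k : Fin (t+u), wt p (joinEquiv t u (a, b) k)
      = (∏ k, wt p (a k)) * ∏ k, wt p (b k) := by
  rw [Fin.prod_univ_add]
  congr 1
  · refine Finset.prod_congr rfl (fun i _ => ?_)
    congr 1
    show joinEquiv t u (a,b) _ = a i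
    rw [show (joinEquiv t u (a,b)) = (joinEquiv t u).toFun (a,b) from rfl]
    unfold joinEquiv
    simp only [Equiv.coe_fn_mk]
    rw [dif_pos (by simpa using i.isLt)]
    refine congrArg _ (Fin.ext ?_)
    simp
  · refine Finset.prod_congr rfl (fun i _ => ?_)
    congr 1
    show joinEquiv t u (a,b) _ = b i
    rw [show (joinEquiv t u (a,b)) = (joinEquiv t u).toFun (a,b) from rfl]
    unfold joinEquiv
    simp only [Equiv.coe_fn_mk]
    rw [dif_neg (by simp : ¬ ((Fin.natAdd t i : Fin (t+u)) : ℕ) < t)]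
    refine congrArg _ (Fin.ext ?_)
    simp

lemma walkFn_shift {t : ℕ} (x : ℤ) (ε : ℕ → Bool) (i : ℕ) :
    walkFn x ε (t + i) = walkFn x ε t + ∑ k ∈ Finset.range i, stepVal (ε (t + k)) := by
  unfold walkFn
  rw [← Finset.sum_range_add_sum_Ico _ (by omega : t ≤ t + i), add_assoc]
  congr 2
  rw [Finset.sum_Ico_eq_sum_range]
  simp

lemma walkFn_join_shift {t u : ℕ} (x : ℤ) (a : Fin t → Bool) (b : Fin u → Bool) (i : ℕ) :
    walkFn x (extendF false (joinEquiv t u (a, b))) (t + i)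
      = walkFn x (extendF false (joinEquiv t u (a, b))) t
        + walkFn 0 (extendF false b) i := by
  rw [walkFn_shift]
  congr 1
  unfold walkFn
  rw [zero_add]
  exact Finset.sum_congr rfl (fun k _ => by rw [joinEquiv_apply_shift])

lemma sum_prod_wt (p : ℝ) (u : ℕ) : ∑ b : Fin u → Bool, ∏ k, wt p (b k) = 1 := by
  rw [← Fintype.prod_sum (fun (_ : Fin u) (b : Bool) => wt p b)]
  simp [wt]

lemma walkFn_join_prefix {t u : ℕ} (x : ℤ) (a : Fin t → Bool) (b : Fin u → Bool) {i : ℕ}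
    (hi : i ≤ t) :
    walkFn x (extendF false (joinEquiv t u (a, b))) i = walkFn x (extendF false a) i :=
  walkFn_congr (fun k hk => joinEquiv_apply_lt a b (lt_of_lt_of_le hk hi))

lemma walkProb_split (p : ℝ) (x : ℤ) (t u : ℕ) (P Q : (ℕ → ℤ) → Prop)
    (hP : ∀ ε ε' : ℕ → Bool, (∀ k < t, ε k = ε' k) → P (walkFn x ε) → P (walkFn x ε')) :
    walkProb p x (t+u) (fun S => P S ∧ S t = 0 ∧ Q (fun i => S (t+i)))
      = walkProb p x t (fun S => P S ∧ S t = 0) * walkProb p 0 u Q := by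
  classical
  unfold walkProb
  rw [← Equiv.sum_comp (joinEquiv t u), Fintype.sum_prod_type, Fintype.sum_mul_sum]
  refine Finset.sum_congr rfl (fun a _ => Finset.sum_congr rfl (fun b _ => ?_))
  dsimp only
  have hag : ∀ k < t, extendF false (joinEquiv t u (a,b)) k = extendF false a k :=
    fun k hk => joinEquiv_apply_lt a b hk
  set S := walkFn x (extendF false (joinEquiv t u (a,b))) with hS
  set Sa := walkFn x (extendF false a) with hSa
  set Sb := walkFn 0 (extendF false b) with hSb
  have hPiff : P S ↔ P Sa := ⟨hP _ _ hag, hP _ _ (fun k hk => (hag k hk).symm)⟩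
  have hSt : S t = Sa t := walkFn_join_prefix x a b le_rfl
  have hiff : (P S ∧ S t = 0 ∧ Q (fun i => S (t+i))) ↔ ((P Sa ∧ Sa t = 0) ∧ Q Sb) := by
    constructor
    · rintro ⟨h1, h2, h3⟩
      refine ⟨⟨hPiff.1 h1, hSt ▸ h2⟩, ?_⟩
      have he : (fun i => S (t+i)) = Sb := funext fun i => by
        rw [hS, walkFn_join_shift, ← hS, h2, zero_add]
      rwa [he] at h3
    · rintro ⟨⟨h1, h2⟩, h3⟩
      have h2' : S t = 0 := by rw [hSt]; exact h2
      refine ⟨hPiff.2 h1, h2', ?_⟩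
      have he : (fun i => S (t+i)) = Sb := funext fun i => by
        rw [hS, walkFn_join_shift, ← hS, h2', zero_add]
      rw [he]; exact h3
  rw [prod_wt_join]
  by_cases h1 : (P Sa ∧ Sa t = 0) <;> by_cases h2 : Q Sb <;>
    simp [hiff, h1, h2]

lemma walkProb_extend (p : ℝ) (x : ℤ) (t u : ℕ) (P : (ℕ → ℤ) → Prop)
    (hP : ∀ ε ε' : ℕ → Bool, (∀ k < t, ε k = ε' k) → P (walkFn x ε) → P (walkFn x ε')) :
    walkProb p x (t+u) P = walkProb p x t P := by
  classical
  unfold walkProb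
  rw [← Equiv.sum_comp (joinEquiv t u), Fintype.sum_prod_type]
  have key : ∀ a : Fin t → Bool, ∀ b : Fin u → Bool,
      (if P (walkFn x (extendF false (joinEquiv t u (a,b)))) then
        ∏ k, wt p (joinEquiv t u (a,b) k) else 0)
      = (if P (walkFn x (extendF false a)) then ∏ k, wt p (a k) else 0) * ∏ k, wt p (b k) := by
    intro a b
    have hag : ∀ k < t, extendF false (joinEquiv t u (a,b)) k = extendF false a k :=
      fun k hk => joinEquiv_apply_lt a b hk
    have hPiff : P (walkFn x (extendF false (joinEquiv t u (a,b)))) ↔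
        P (walkFn x (extendF false a)) := ⟨hP _ _ hag, hP _ _ (fun k hk => (hag k hk).symm)⟩
    rw [prod_wt_join]
    by_cases h1 : P (walkFn x (extendF false a)) <;> simp [hPiff, h1]
  calc (∑ a : Fin t → Bool, ∑ b : Fin u → Bool,
        if P (walkFn x (extendF false (joinEquiv t u (a,b)))) then
          ∏ k, wt p (joinEquiv t u (a,b) k) else 0)
      = ∑ a : Fin t → Bool, ∑ b : Fin u → Bool,
        (if P (walkFn x (extendF false a)) then ∏ k, wt p (a k) else 0) * ∏ k, wt p (b k) := by
        exact Finset.sum_congr rfl (fun a _ => Finset.sum_congr rfl (fun b _ => key a b))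
    _ = ∑ a : Fin t → Bool,
        (if P (walkFn x (extendF false a)) then ∏ k, wt p (a k) else 0) *
          ∑ b : Fin u → Bool, ∏ k, wt p (b k) := by
        exact Finset.sum_congr rfl (fun a _ => (Finset.mul_sum _ _ _).symm)
    _ = ∑ a : Fin t → Bool,
        (if P (walkFn x (extendF false a)) then ∏ k, wt p (a k) else 0) := by
        rw [sum_prod_wt]; simp

-- first-step decomposition
lemma extendF_cons_succ {n : ℕ} (b : Bool) (ε' : Fin n → Bool) (k : ℕ) :
    extendF false (Fin.cons b ε' : Fin (n+1) → Bool) (k+1) = extendF false ε' k := by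
  unfold extendF
  by_cases hk : k < n
  · rw [dif_pos (by omega : k+1 < n+1), dif_pos hk]
    show (Fin.cons b ε' : Fin (n+1) → Bool) (Fin.succ ⟨k, hk⟩) = _
    rw [Fin.cons_succ]
  · rw [dif_neg (by omega : ¬ k+1 < n+1), dif_neg hk]

lemma extendF_cons_zero {n : ℕ} (b : Bool) (ε' : Fin n → Bool) :
    extendF false (Fin.cons b ε' : Fin (n+1) → Bool) 0 = b := by
  unfold extendF
  rw [dif_pos (by omega : 0 < n+1)]
  show (Fin.cons b ε' : Fin (n+1) → Bool) 0 = b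
  rw [Fin.cons_zero]

lemma walkFn_cons (x : ℤ) {n : ℕ} (b : Bool) (ε' : Fin n → Bool) (j : ℕ) :
    walkFn x (extendF false (Fin.cons b ε' : Fin (n+1) → Bool)) (j+1)
      = walkFn (x + stepVal b) (extendF false ε') j := by
  induction j with
  | zero => rw [walkFn_succ, walkFn_zero, walkFn_zero, extendF_cons_zero]
  | succ j ih => rw [walkFn_succ, ih, walkFn_succ, extendF_cons_succ]

lemma walkProb_firstStep (p : ℝ) (x : ℤ) (n : ℕ) (P : (ℕ → ℤ) → Prop) :
    walkProb p x (n+1) P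
      = p * walkProb p (x+1) n (fun S => P (fun i => if i = 0 then x else S (i-1)))
        + (1-p) * walkProb p (x-1) n (fun S => P (fun i => if i = 0 then x else S (i-1))) := by
  classical
  unfold walkProb
  rw [← Equiv.sum_comp (Fin.consEquiv (fun _ : Fin (n+1) => Bool)), Fintype.sum_prod_type,
    Fintype.sum_bool]
  have key : ∀ (b : Bool) (ε' : Fin n → Bool),
      (fun i => if i = 0 then x else walkFn (x + stepVal b) (extendF false ε') (i-1))
        = walkFn x (extendF false (Fin.cons b ε' : Fin (n+1) → Bool)) := by
    intro b ε'
    funext i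
    cases i with
    | zero => simp [walkFn_zero]
    | succ j => simp [walkFn_cons]
  have hterm : ∀ (b : Bool) (ε' : Fin n → Bool),
      (if P (walkFn x (extendF false (Fin.consEquiv (fun _ : Fin (n+1) => Bool) (b, ε'))))
        then ∏ k, wt p ((Fin.consEquiv (fun _ : Fin (n+1) => Bool) (b, ε')) k) else 0)
      = wt p b * (if P (fun i => if i = 0 then x
            else walkFn (x + stepVal b) (extendF false ε') (i-1))
          then ∏ k, wt p (ε' k) else 0) := by
    intro b ε'
    have hc : (Fin.consEquiv (fun _ : Fin (n+1) => Bool) (b, ε')) = Fin.cons b ε' := rfl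
    rw [hc, key b ε', Fin.prod_univ_succ]
    simp only [Fin.cons_zero, Fin.cons_succ]
    by_cases h : P (walkFn x (extendF false (Fin.cons b ε' : Fin (n+1) → Bool))) <;>
      simp [h, mul_assoc]
  rw [Finset.sum_congr rfl (fun ε' _ => hterm true ε'),
    Finset.sum_congr rfl (fun ε' _ => hterm false ε'), ← Finset.mul_sum, ← Finset.mul_sum]
  have h1 : (x + stepVal true) = x + 1 := rfl
  have h2 : (x + stepVal false) = x - 1 := by simp [stepVal]; ring
  rw [h1, h2]
  simp [wt]

-- ballot numbers
noncomputable def Efn (j k : ℕ) : ℝ :=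
  if k = 0 then (if j = 0 then 1 else 0)
  else (k : ℝ) * ((2*j+k-1).factorial : ℝ) / ((j.factorial : ℝ) * ((j+k).factorial : ℝ))

lemma Efn_zero_left (k : ℕ) : Efn 0 k = 1 := by
  unfold Efn
  rcases Nat.eq_zero_or_pos k with h | h
  · simp [h]
  · rw [if_neg (by omega)]
    have h1 : 2*0+k-1 = k-1 := by omega
    have h2 : (k:ℝ) * ((k-1).factorial : ℝ) = (k.factorial : ℝ) := by
      exact_mod_cast Nat.mul_factorial_pred h.ne'
    rw [h1, h2]
    have : (0+k) = k := by omega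
    rw [this]
    field_simp [Nat.factorial]
    norm_num [Nat.factorial]

lemma Efn_zero_right {j : ℕ} (hj : j ≠ 0) : Efn j 0 = 0 := by simp [Efn, hj]

lemma factorial_cast_pos (m : ℕ) : (0:ℝ) < (m.factorial : ℝ) := by
  exact_mod_cast Nat.factorial_pos m

lemma Efn_rec (j k : ℕ) : Efn (j+1) (k+1) = Efn (j+1) k + Efn j (k+2) := by
  rcases Nat.eq_zero_or_pos k with rfl | hk
  · -- Efn (j+1) 1 = Efn (j+1) 0 + Efn j 2
    rw [Efn_zero_right (by omega), zero_add]
    unfold Efn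
    rw [if_neg one_ne_zero, if_neg (by omega)]
    have e1 : 2*(j+1)+1-1 = (2*j+1)+1 := by omega
    have e2 : 2*j+2-1 = 2*j+1 := by omega
    have e3 : (j+1)+1 = j+2 := by omega
    rw [e1, e2, e3, Nat.factorial_succ (2*j+1), Nat.factorial_succ j]
    have h1 := (factorial_cast_pos j).ne'
    have h2 := (factorial_cast_pos (2*j+1)).ne'
    have h3 := (factorial_cast_pos (j+2)).ne'
    push_cast
    field_simp
    ring
  · obtain ⟨k, rfl⟩ := Nat.exists_eq_add_of_le hk
    -- k := 1 + k'
    unfold Efn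
    rw [if_neg (by omega), if_neg (by omega), if_neg (by omega)]
    have e1 : 2*(j+1)+(1+k+1)-1 = (2*j+k+2)+1 := by omega
    have e2 : 2*(j+1)+(1+k)-1 = 2*j+k+2 := by omega
    have e3 : 2*j+(1+k+2)-1 = 2*j+k+2 := by omega
    have e4 : (j+1)+(1+k+1) = (j+k+2)+1 := by omega
    have e5 : (j+1)+(1+k) = j+k+2 := by omega
    have e6 : j+(1+k+2) = (j+k+2)+1 := by omega
    rw [e1, e2, e3, e4, e5, e6, Nat.factorial_succ (2*j+k+2), Nat.factorial_succ (j+k+2),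
      Nat.factorial_succ j]
    have h1 := (factorial_cast_pos j).ne'
    have h2 := (factorial_cast_pos (2*j+k+2)).ne'
    have h3 := (factorial_cast_pos (j+k+2)).ne'
    push_cast
    field_simp
    ring

lemma Efn_conv (j k : ℕ) :
    ∑ m ∈ Finset.range (j+1), Efn m 1 * Efn (j-m) k = Efn j (k+1) := by
  suffices H : ∀ N j k, 2*j+k ≤ N →
      ∑ m ∈ Finset.range (j+1), Efn m 1 * Efn (j-m) k = Efn j (k+1) from H _ j k le_rfl
  intro N
  induction N with
  | zero =>
    intro j k h
    have hj : j = 0 := by omega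
    have hk : k = 0 := by omega
    subst hj; subst hk
    simp [Efn_zero_left]
  | succ N IH =>
    intro j k hjk
    rcases Nat.eq_zero_or_pos j with rfl | hj
    · simp [Efn_zero_left]
    rcases Nat.eq_zero_or_pos k with rfl | hk
    · rw [Finset.sum_eq_single_of_mem j (Finset.self_mem_range_succ j)]
      · rw [Nat.sub_self, Efn_zero_left, mul_one]
      · intro m hm hne
        rw [Efn_zero_right (by rw [Finset.mem_range] at hm; omega), mul_zero]
    · -- main step
      have hsplit : ∀ m ∈ Finset.range (j+1),
          Efn m 1 * Efn (j-m) k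
            = Efn m 1 * Efn (j-m) (k-1)
              + (if m < j then Efn m 1 * Efn (j-1-m) (k+1) else 0) := by
        intro m hm
        rw [Finset.mem_range] at hm
        rcases Nat.lt_or_ge m j with hmj | hmj
        · rw [if_pos hmj, ← mul_add]
          congr 1
          have h1 : j - m = (j-m-1)+1 := by omega
          have h2 : k = (k-1)+1 := by omega
          rw [h1, h2, Efn_rec]
          congr 2 <;> omega
        · have hmj' : m = j := by omega
          subst hmj'
          rw [if_neg (by omega), add_zero, Nat.sub_self, Efn_zero_left, Efn_zero_left]
      rw [Finset.sum_congr rfl hsplit, Finset.sum_add_distrib]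
      have hA : ∑ m ∈ Finset.range (j+1), Efn m 1 * Efn (j-m) (k-1) = Efn j k := by
        have := IH j (k-1) (by omega)
        rw [this]
        congr 1
        omega
      have hB : ∑ m ∈ Finset.range (j+1),
          (if m < j then Efn m 1 * Efn (j-1-m) (k+1) else 0) = Efn (j-1) (k+2) := by
        rw [Finset.sum_range_succ, if_neg (by omega), add_zero]
        have h1 : ∑ m ∈ Finset.range j, (if m < j then Efn m 1 * Efn (j-1-m) (k+1) else 0)
            = ∑ m ∈ Finset.range j, Efn m 1 * Efn (j-1-m) (k+1) := by
          refine Finset.sum_congr rfl (fun m hm => ?_)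
          rw [Finset.mem_range] at hm
          rw [if_pos hm]
        rw [h1]
        have h2 : j = (j-1)+1 := by omega
        rw [h2]
        have := IH (j-1) (k+1) (by omega)
        simpa using this
      rw [hA, hB]
      have h3 : j = (j-1)+1 := by omega
      rw [h3]
      exact (Efn_rec (j-1) k).symm

-- first passage to 0 staying positive
def posEvent (t : ℕ) : (ℕ → ℤ) → Prop := fun S => (∀ i < t, 0 < S i) ∧ S t = 0

noncomputable def psiv (p : ℝ) (t h : ℕ) : ℝ :=
  if h ≤ t ∧ (t - h) % 2 = 0 then
    Efn ((t-h)/2) h * p^((t-h)/2) * (1-p)^((t-h)/2 + h) else 0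

lemma psiv_rec (p : ℝ) (t h : ℕ) (hh : 1 ≤ h) :
    psiv p (t+1) h = p * psiv p t (h+1) + (1-p) * psiv p t (h-1) := by
  unfold psiv
  by_cases hc : h ≤ t+1 ∧ (t+1-h) % 2 = 0
  · rw [if_pos hc]
    obtain ⟨hc1, hc2⟩ := hc
    set u := (t+1-h)/2 with hu
    rcases Nat.eq_zero_or_pos u with hu0 | hu1
    · have ht : t+1 = h := by omega
      rw [if_neg (by omega), if_pos (by constructor <;> omega)]
      have e1 : (t-(h-1))/2 = 0 := by omega
      have e2 : u = 0 := hu0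
      rw [e1, e2]
      have e3 : h = (h-1)+1 := by omega
      rw [Efn_zero_left, Efn_zero_left]
      rw [show 0 + h = (0 + (h-1)) + 1 by omega, pow_succ]
      ring
    · rw [if_pos (by constructor <;> omega), if_pos (by constructor <;> omega)]
      have e1 : (t-(h+1))/2 = u - 1 := by omega
      have e2 : (t-(h-1))/2 = u := by omega
      rw [e1, e2]
      have hrec : Efn u h = Efn u (h-1) + Efn (u-1) (h+1) := by
        have := Efn_rec (u-1) (h-1)
        rw [show (u-1)+1 = u by omega, show (h-1)+1 = h by omega,
          show (h-1)+2 = h+1 by omega] at this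
        exact this
      rw [hrec]
      rw [show u = (u-1)+1 by omega, pow_succ]
      rw [show (u-1)+1 = u by omega]
      rw [show u + h = (u + (h-1)) + 1 by omega, pow_succ (1-p) (u + (h-1))]
      rw [show u - 1 + (h+1) = u + (h-1) + 1 by omega, pow_succ (1-p) (u + (h-1))]
      ring
  · rw [if_neg hc]
    rw [if_neg (by omega), if_neg (by omega)]
    ring

lemma psi_eq (p : ℝ) : ∀ (t h : ℕ), walkProb p (h:ℤ) t (posEvent t) = psiv p t h := by
  intro t
  induction t with
  | zero =>
    intro h
    unfold walkProb posEvent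
    rw [Fintype.sum_subsingleton _ (fun _ : Fin 0 => false)]
    rw [walkFn_zero]
    unfold psiv
    rcases Nat.eq_zero_or_pos h with rfl | hh
    · norm_num [Efn_zero_left]
    · rw [if_neg (by push_cast; omega), if_neg (by omega)]
  | succ t IH =>
    intro h
    rcases Nat.eq_zero_or_pos h with rfl | hh
    · rw [walkProb_of_false (fun ε hP => by
        have h0 := hP.1 0 (by omega)
        rw [walkFn_zero] at h0
        exact lt_irrefl _ (by exact_mod_cast h0))]
      unfold psiv
      by_cases hc : (0:ℕ) ≤ t+1 ∧ (t+1-0) % 2 = 0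
      · rw [if_pos hc]
        rw [Efn_zero_right (by omega : (t+1-0)/2 ≠ 0)]
        ring
      · rw [if_neg hc]
    · rw [walkProb_firstStep]
      have hiff : ∀ S' : ℕ → ℤ,
          (posEvent (t+1) (fun i => if i = 0 then (h:ℤ) else S' (i-1))) ↔ posEvent t S' := by
        intro S'
        unfold posEvent
        constructor
        · rintro ⟨hA, hB⟩
          refine ⟨fun j hj => ?_, ?_⟩
          · have := hA (j+1) (by omega)
            simpa using this
          · simpa using hB
        · rintro ⟨hA, hB⟩
          refine ⟨fun i hi => ?_, by simpa using hB⟩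
          cases i with
          | zero => simpa using (by exact_mod_cast hh : (0:ℤ) < (h:ℤ))
          | succ j => simpa using hA j (by omega)
      rw [walkProb_congr hiff, walkProb_congr hiff]
      have c1 : (h:ℤ) + 1 = ((h+1 : ℕ) : ℤ) := by push_cast; ring
      have c2 : (h:ℤ) - 1 = ((h-1 : ℕ) : ℤ) := by push_cast [hh]; omega
      rw [c1, c2, IH (h+1), IH (h-1)]
      exact (psiv_rec p t h hh).symm

-- congruence on walk paths only
lemma walkProb_congr' {p : ℝ} {x : ℤ} {n : ℕ} {P Q : (ℕ → ℤ) → Prop}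
    (h : ∀ ε : Fin n → Bool, P (walkFn x (extendF false ε)) ↔ Q (walkFn x (extendF false ε))) :
    walkProb p x n P = walkProb p x n Q := by
  unfold walkProb
  refine Finset.sum_congr rfl (fun ε _ => ?_)
  congr 1
  exact propext (h ε)

def negEvent (t : ℕ) : (ℕ → ℤ) → Prop := fun S => (∀ i < t, S i < 0) ∧ S t = 0

lemma walkFn_not {h : ℤ} {t : ℕ} (ε : Fin t → Bool) :
    ∀ i ≤ t, walkFn (-h) (extendF false (fun k => !(ε k))) i
      = - walkFn h (extendF false ε) i := by
  intro i
  induction i with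
  | zero => intro _; rw [walkFn_zero, walkFn_zero]
  | succ i ih =>
    intro hit
    rw [walkFn_succ, walkFn_succ, ih (by omega)]
    have hi : i < t := by omega
    have : extendF false (fun k => !(ε k)) i = !(extendF false ε i) := by
      unfold extendF
      rw [dif_pos hi, dif_pos hi]
    rw [this]
    have : ∀ b : Bool, stepVal (!b) = - stepVal b := by intro b; cases b <;> simp [stepVal]
    rw [this]
    ring

lemma walkProb_negflip (p : ℝ) (h : ℤ) (t : ℕ) :
    walkProb p (-h) t (negEvent t) = walkProb (1-p) h t (posEvent t) := by
  classical
  unfold walkProb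
  let e : (Fin t → Bool) ≃ (Fin t → Bool) :=
    ⟨fun ε k => !(ε k), fun ε k => !(ε k),
      fun ε => funext fun k => Bool.not_not _, fun ε => funext fun k => Bool.not_not _⟩
  rw [← Equiv.sum_comp e]
  refine Finset.sum_congr rfl (fun ε _ => ?_)
  have hiff : negEvent t (walkFn (-h) (extendF false (fun k => !(ε k))))
      ↔ posEvent t (walkFn h (extendF false ε)) := by
    unfold negEvent posEvent
    constructor
    · rintro ⟨hA, hB⟩
      refine ⟨fun i hi => ?_, ?_⟩
      · have := hA i hi
        rw [walkFn_not ε i (by omega)] at this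
        omega
      · have := hB
        rw [walkFn_not ε t le_rfl] at this
        omega
    · rintro ⟨hA, hB⟩
      refine ⟨fun i hi => ?_, ?_⟩
      · rw [walkFn_not ε i (by omega)]
        have := hA i hi
        omega
      · rw [walkFn_not ε t le_rfl, hB]
        ring
  have hwt : ∏ k, wt p ((e ε) k) = ∏ k, wt (1-p) (ε k) := by
    refine Finset.prod_congr rfl (fun k _ => ?_)
    show wt p (!(ε k)) = wt (1-p) (ε k)
    cases hb : ε k <;> simp [wt] <;> ring
  show (if negEvent t (walkFn (-h) (extendF false (fun k => !(ε k)))) then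
      ∏ k, wt p ((e ε) k) else 0) = _
  rw [hwt]
  congr 1
  exact propext hiff

-- negative-side IVT
lemma walkFn_neg_of_ne_zero {x : ℤ} {ε : ℕ → Bool} (hj : walkFn x ε 0 < 0)
    (t : ℕ) (hne : ∀ i, 0 < i → i ≤ t → walkFn x ε i ≠ 0) :
    ∀ i, i ≤ t → walkFn x ε i < 0 := by
  intro i
  induction i with
  | zero => intro _; exact hj
  | succ i ih =>
    intro hit
    have hneg : walkFn x ε i < 0 := ih (by omega)
    have hne' := hne (i+1) (by omega) hit
    have hstep := walkFn_succ x ε i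
    have hs : stepVal (ε i) = 1 ∨ stepVal (ε i) = -1 := by
      cases ε i <;> simp [stepVal]
    rcases hs with h1 | h1 <;> rw [h1] at hstep <;> omega

def fzEvent (t : ℕ) : (ℕ → ℤ) → Prop :=
  fun S => (∀ i, 1 ≤ i → i < t → S i ≠ 0) ∧ S t = 0

def neEvent (t : ℕ) : (ℕ → ℤ) → Prop := fun S => (∀ i < t, S i ≠ 0) ∧ S t = 0

lemma R_even (p : ℝ) (m : ℕ) (hm : 1 ≤ m) :
    walkProb p 0 (2*m) (fzEvent (2*m)) = 2 * Efn (m-1) 1 * (p*(1-p))^m := by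
  have ht : 2*m = (2*m-1)+1 := by omega
  rw [ht, walkProb_firstStep]
  set t := 2*m-1 with htdef
  have hiff : ∀ S' : ℕ → ℤ,
      (fzEvent (t+1) (fun i => if i = 0 then (0:ℤ) else S' (i-1))) ↔ neEvent t S' := by
    intro S'
    unfold fzEvent neEvent
    constructor
    · rintro ⟨hA, hB⟩
      refine ⟨fun j hj => ?_, by simpa using hB⟩
      have := hA (j+1) (by omega) (by omega)
      simpa using this
    · rintro ⟨hA, hB⟩
      refine ⟨fun i h1 h2 => ?_, by simpa using hB⟩
      cases i with
      | zero => omega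
      | succ j => simpa using hA j (by omega)
  rw [walkProb_congr hiff, walkProb_congr hiff]
  -- positive side
  have hpos : walkProb p (0+1) t (neEvent t) = walkProb p 1 t (posEvent t) := by
    rw [show (0:ℤ)+1 = 1 by ring]
    refine walkProb_congr' (fun ε => ?_)
    unfold neEvent posEvent
    constructor
    · rintro ⟨hA, hB⟩
      refine ⟨fun i hi => ?_, hB⟩
      have h0 : 0 < walkFn 1 (extendF false ε) 0 := by rw [walkFn_zero]; omega
      exact walkFn_pos_of_ne_zero h0 (t-1) (fun i' hi1 hi2 => hA i' (by omega)) i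
        (by omega) (by omega)
    · rintro ⟨hA, hB⟩
      exact ⟨fun i hi => (hA i hi).ne', hB⟩
  have hneg : walkProb p (0-1) t (neEvent t) = walkProb p (-1) t (negEvent t) := by
    rw [show (0:ℤ)-1 = -1 by ring]
    refine walkProb_congr' (fun ε => ?_)
    unfold neEvent negEvent
    constructor
    · rintro ⟨hA, hB⟩
      refine ⟨fun i hi => ?_, hB⟩
      have h0 : walkFn (-1) (extendF false ε) 0 < 0 := by rw [walkFn_zero]; omega
      exact walkFn_neg_of_ne_zero h0 (t-1) (fun i' hi1 hi2 => hA i' (by omega)) i (by omega)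
    · rintro ⟨hA, hB⟩
      exact ⟨fun i hi => (hA i hi).ne, hB⟩
  rw [hpos, hneg]
  have hflip : walkProb p (-1) t (negEvent t) = walkProb (1-p) 1 t (posEvent t) := by
    have := walkProb_negflip p 1 t
    simpa using this
  rw [hflip]
  have h1 : walkProb p 1 t (posEvent t) = psiv p t 1 := by
    have := psi_eq p t 1
    simpa using this
  have h2 : walkProb (1-p) 1 t (posEvent t) = psiv (1-p) t 1 := by
    have := psi_eq (1-p) t 1
    simpa using this
  rw [h1, h2]
  unfold psiv
  have hcnd : 1 ≤ t ∧ (t-1) % 2 = 0 := by constructor <;> omega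
  rw [if_pos hcnd, if_pos hcnd]
  have e1 : (t-1)/2 = m-1 := by omega
  rw [e1]
  have e2 : 1 - (1-p) = p := by ring
  rw [e2]
  have e3 : m = (m-1)+1 := by omega
  rw [show m-1+1 = (m-1)+1 from rfl]
  calc p * (Efn (m-1) 1 * p^(m-1) * (1-p)^((m-1)+1))
        + (1-p) * (Efn (m-1) 1 * (1-p)^(m-1) * p^((m-1)+1))
      = 2 * Efn (m-1) 1 * (p*(1-p))^((m-1)+1) := by
        rw [mul_pow, pow_succ, pow_succ]
        ring
    _ = 2 * Efn (m-1) 1 * (p*(1-p))^m := by rw [← e3]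

lemma R_odd (p : ℝ) {t : ℕ} (ht : Odd t) : walkProb p 0 t (fzEvent t) = 0 := by
  refine walkProb_of_false (fun ε hP => ?_)
  exact walkFn_ne_zero_of_odd _ ht hP.2

-- localCount lemmas
lemma localCount_le (n : ℕ) (ε : ℕ → Bool) :
    localCount n (walkFn 0 ε) ≤ n/2 := by
  unfold localCount
  have hsub : ((Finset.Icc 1 n).filter (fun i => walkFn 0 ε i = 0))
      ⊆ ((Finset.Icc 1 n).filter (fun i => i % 2 = 0)) := by
    intro i hi
    rw [Finset.mem_filter] at hi ⊢
    refine ⟨hi.1, ?_⟩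
    by_contra hodd
    exact walkFn_ne_zero_of_odd ε (Nat.odd_iff.2 (by omega)) hi.2
  refine le_trans (Finset.card_le_card hsub) ?_
  have : ((Finset.Icc 1 n).filter (fun i => i % 2 = 0)).card ≤ (Finset.Icc 1 (n/2)).card := by
    refine Finset.card_le_card_of_injOn (fun i => i/2) ?_ ?_
    · intro i hi
      simp only [Finset.coe_filter, Finset.mem_coe, Set.mem_setOf_eq, Finset.mem_filter, Finset.mem_Icc] at hi
      simp only [Finset.mem_coe, Finset.coe_Icc, Set.mem_Icc, Finset.mem_Icc]
      omega
    · intro i hi j hj hij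
      simp only [Finset.coe_filter, Set.mem_setOf_eq, Finset.mem_Icc] at hi hj
      simp only [] at hij
      omega
  rwa [Nat.card_Icc, Nat.add_sub_cancel] at this

lemma localCount_split {S : ℕ → ℤ} {n t : ℕ} (ht1 : 1 ≤ t) (htn : t ≤ n)
    (hfz : fzEvent t S) :
    localCount n S = 1 + localCount (n-t) (fun i => S (t+i)) := by
  unfold localCount
  have hset : ((Finset.Icc 1 n).filter (fun i => S i = 0))
      = insert t (((Finset.Icc 1 (n-t)).filter (fun j => S (t+j) = 0)).image (fun j => t+j)) := by
    ext i
    simp only [Finset.mem_filter, Finset.mem_insert, Finset.mem_image, Finset.mem_Icc]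
    constructor
    · rintro ⟨⟨hi1, hi2⟩, hi0⟩
      rcases Nat.lt_trichotomy i t with h | h | h
      · exact absurd hi0 (hfz.1 i hi1 h)
      · exact Or.inl h
      · refine Or.inr ⟨i - t, ⟨⟨by omega, by omega⟩, ?_⟩, by omega⟩
        rw [show t + (i-t) = i by omega]
        exact hi0
    · rintro (rfl | ⟨j, ⟨⟨hj1, hj2⟩, hj0⟩, rfl⟩)
      · exact ⟨⟨ht1, htn⟩, hfz.2⟩
      · exact ⟨⟨by omega, by omega⟩, hj0⟩
  have hnm : t ∉ (((Finset.Icc 1 (n-t)).filter (fun j => S (t+j) = 0)).image (fun j => t+j)) := by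
    intro hmem
    rw [Finset.mem_image] at hmem
    obtain ⟨j, hj, hjt⟩ := hmem
    rw [Finset.mem_filter, Finset.mem_Icc] at hj
    omega
  rw [hset, Finset.card_insert_of_notMem hnm, Finset.card_image_of_injective _
    (add_right_injective t)]
  simp [add_comm]

lemma sum_fz_indicator (S : ℕ → ℤ) (n : ℕ) (w : ℝ) :
    (∑ t ∈ Finset.Icc 1 n, ind (fzEvent t S) w)
      = ind (∃ i ∈ Finset.Icc 1 n, S i = 0) w := by
  classical
  by_cases hex : ∃ i ∈ Finset.Icc 1 n, S i = 0
  · rw [ind_pos hex]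
    set F := (Finset.Icc 1 n).filter (fun i => S i = 0) with hF
    have hFne : F.Nonempty := by
      obtain ⟨i, hi, hi0⟩ := hex
      exact ⟨i, by rw [hF, Finset.mem_filter]; exact ⟨hi, hi0⟩⟩
    set t0 := F.min' hFne with ht0
    have ht0F : t0 ∈ F := Finset.min'_mem F hFne
    have ht0Icc : t0 ∈ Finset.Icc 1 n := (Finset.mem_filter.1 ht0F).1
    have ht0z : S t0 = 0 := (Finset.mem_filter.1 ht0F).2
    rw [Finset.sum_eq_single_of_mem t0 ht0Icc]
    · rw [ind_pos]
      rotate_left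
      refine ⟨fun i hi1 hi2 hi0 => ?_, ht0z⟩
      have : i ∈ F := by
        rw [hF, Finset.mem_filter, Finset.mem_Icc]
        rw [Finset.mem_Icc] at ht0Icc
        exact ⟨⟨hi1, by omega⟩, hi0⟩
      have := Finset.min'_le F i this
      omega
    · intro t htIcc htne
      refine ind_neg ?_ w
      intro hfz
      have htF : t ∈ F := by
        rw [hF, Finset.mem_filter]
        exact ⟨htIcc, hfz.2⟩
      have hle := Finset.min'_le F t htF
      rcases Nat.lt_or_ge t0 t with h | h
      · rw [Finset.mem_Icc] at ht0Icc
        exact hfz.1 t0 (by omega) h ht0z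
      · omega
  · rw [ind_neg hex]
    refine Finset.sum_eq_zero (fun t htIcc => ?_)
    refine ind_neg ?_ w
    intro hfz
    exact hex ⟨t, htIcc, hfz.2⟩

lemma localCount_eq_zero_of_no_zero {S : ℕ → ℤ} {n : ℕ}
    (h : ¬ ∃ i ∈ Finset.Icc 1 n, S i = 0) : localCount n S = 0 := by
  unfold localCount
  rw [Finset.card_eq_zero, Finset.filter_eq_empty_iff]
  intro i hi hi0
  exact h ⟨i, hi, hi0⟩

lemma localCount_pos_ex {S : ℕ → ℤ} {n k : ℕ} (hk : 1 ≤ k) (h : localCount n S = k) :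
    ∃ i ∈ Finset.Icc 1 n, S i = 0 := by
  by_contra hex
  rw [localCount_eq_zero_of_no_zero hex] at h
  omega

lemma fz_dep (t : ℕ) : ∀ ε ε' : ℕ → Bool, (∀ k < t, ε k = ε' k) →
    (∀ i, 1 ≤ i → i < t → walkFn 0 ε i ≠ 0) → (∀ i, 1 ≤ i → i < t → walkFn 0 ε' i ≠ 0) := by
  intro ε ε' hag h i h1 h2
  rw [← walkFn_congr (fun k hk => hag k (by omega))]
  exact h i h1 h2

lemma A_rec_pos (p : ℝ) (n k : ℕ) (hk : 1 ≤ k) :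
    walkProb p 0 n (fun S => localCount n S = k)
      = ∑ t ∈ Finset.Icc 1 n,
          walkProb p 0 t (fzEvent t)
            * walkProb p 0 (n-t) (fun S => localCount (n-t) S = k-1) := by
  have step1 : walkProb p 0 n (fun S => localCount n S = k)
      = ∑ t ∈ Finset.Icc 1 n, walkProb p 0 n (fun S => fzEvent t S ∧ localCount n S = k) := by
    rw [walkProb_eq_ind]
    rw [Finset.sum_congr rfl (fun t (_ : t ∈ Finset.Icc 1 n) =>
      walkProb_eq_ind p 0 n (fun S => fzEvent t S ∧ localCount n S = k)), Finset.sum_comm]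
    refine Finset.sum_congr rfl (fun ε _ => ?_)
    set S := walkFn 0 (extendF false ε) with hS
    set w := ∏ k', wt p (ε k') with hw
    show ind (localCount n S = k) w = ∑ t ∈ Finset.Icc 1 n, ind (fzEvent t S ∧ localCount n S = k) w
    by_cases h2 : localCount n S = k
    · rw [ind_pos h2]
      have hpt : ∀ t ∈ Finset.Icc 1 n,
          ind (fzEvent t S ∧ localCount n S = k) w = ind (fzEvent t S) w := by
        intro t _
        by_cases h1 : fzEvent t S
        · rw [ind_pos (⟨h1, h2⟩ : fzEvent t S ∧ localCount n S = k), ind_pos h1]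
        · rw [ind_neg (fun hc => h1 hc.1), ind_neg h1]
      rw [Finset.sum_congr rfl hpt, sum_fz_indicator, ind_pos (localCount_pos_ex hk h2)]
    · rw [ind_neg h2]
      symm
      exact Finset.sum_eq_zero (fun t _ => ind_neg (fun hc => h2 hc.2) w)
  rw [step1]
  refine Finset.sum_congr rfl (fun t ht => ?_)
  rw [Finset.mem_Icc] at ht
  have hcongr : ∀ S : ℕ → ℤ,
      (fzEvent t S ∧ localCount n S = k)
        ↔ ((∀ i, 1 ≤ i → i < t → S i ≠ 0) ∧ S t = 0
            ∧ localCount (n-t) (fun i => S (t+i)) = k-1) := by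
    intro S
    constructor
    · rintro ⟨hfz, hlc⟩
      refine ⟨hfz.1, hfz.2, ?_⟩
      have := localCount_split ht.1 ht.2 hfz
      omega
    · rintro ⟨h1, h2, h3⟩
      have hfz : fzEvent t S := ⟨h1, h2⟩
      refine ⟨hfz, ?_⟩
      have := localCount_split ht.1 ht.2 hfz
      omega
  rw [walkProb_congr hcongr]
  obtain ⟨u, hu⟩ : ∃ u, n = t + u := ⟨n - t, by omega⟩
  have h2 : n - t = u := by omega
  rw [h2]
  subst hu
  exact Eq.trans (walkProb_split p 0 t u (fun S => ∀ i, 1 ≤ i → i < t → S i ≠ 0)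
    (fun S' => localCount u S' = k-1) (fz_dep t)) rfl

lemma A_rec_zero (p : ℝ) (n : ℕ) :
    walkProb p 0 n (fun S => localCount n S = 0)
      = 1 - ∑ t ∈ Finset.Icc 1 n, walkProb p 0 t (fzEvent t) := by
  have hRt : ∀ t ∈ Finset.Icc 1 n,
      walkProb p 0 n (fzEvent t) = walkProb p 0 t (fzEvent t) := by
    intro t ht
    rw [Finset.mem_Icc] at ht
    have hcongr : ∀ S : ℕ → ℤ,
        (fzEvent t S)
          ↔ ((∀ i, 1 ≤ i → i < t → S i ≠ 0) ∧ S t = 0 ∧ True) := by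
      intro S
      exact ⟨fun h => ⟨h.1, h.2, trivial⟩, fun h => ⟨h.1, h.2.1⟩⟩
    rw [walkProb_congr hcongr]
    obtain ⟨u, hu⟩ : ∃ u, n = t + u := ⟨n - t, by omega⟩
    subst hu
    refine Eq.trans (walkProb_split p 0 t u (fun S => ∀ i, 1 ≤ i → i < t → S i ≠ 0)
      (fun _ => True) (fz_dep t)) ?_
    rw [walkProb_total, mul_one]
    rfl
  have hpart : walkProb p 0 n (fun _ => True)
      = walkProb p 0 n (fun S => localCount n S = 0)
        + ∑ t ∈ Finset.Icc 1 n, walkProb p 0 n (fun S => fzEvent t S) := by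
    rw [walkProb_eq_ind, walkProb_eq_ind,
      Finset.sum_congr rfl (fun t (_ : t ∈ Finset.Icc 1 n) =>
        walkProb_eq_ind p 0 n (fun S => fzEvent t S)), Finset.sum_comm,
      ← Finset.sum_add_distrib]
    refine Finset.sum_congr rfl (fun ε _ => ?_)
    set S := walkFn 0 (extendF false ε) with hS
    set w := ∏ k', wt p (ε k') with hw
    show ind True w = ind (localCount n S = 0) w + ∑ t ∈ Finset.Icc 1 n, ind (fzEvent t S) w
    rw [sum_fz_indicator, ind_pos trivial]
    by_cases hex : ∃ i ∈ Finset.Icc 1 n, S i = 0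
    · rw [ind_pos hex, ind_neg, zero_add]
      obtain ⟨i, hi, hi0⟩ := hex
      intro hlc
      unfold localCount at hlc
      rw [Finset.card_eq_zero] at hlc
      have : i ∈ (Finset.Icc 1 n).filter (fun i => S i = 0) := by
        rw [Finset.mem_filter]; exact ⟨hi, hi0⟩
      rw [hlc] at this
      exact absurd this (Finset.notMem_empty i)
    · rw [ind_neg hex, ind_pos (localCount_eq_zero_of_no_zero hex), add_zero]
  rw [walkProb_total] at hpart
  rw [Finset.sum_congr rfl hRt] at hpart
  linarith

-- the coefficient function from the statement
noncomputable def cfn (m k : ℕ) : ℝ :=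
  ((2*m+k-2).factorial : ℝ)/((m.factorial : ℝ) * ((m+k).factorial : ℝ)) *
    ((k : ℝ)^2 - (k : ℝ) - 2*(m : ℝ))

lemma cfn_zero (m : ℕ) (hm : 1 ≤ m) : cfn m 0 = -2 * Efn (m-1) 1 := by
  obtain ⟨a, rfl⟩ : ∃ a, m = a + 1 := ⟨m-1, by omega⟩
  unfold cfn Efn
  rw [if_neg one_ne_zero]
  rw [show 2*(a+1)+0-2 = 2*a by omega, show (a+1)+0 = a+1 by omega,
    show (a+1)-1 = a from rfl, show 2*a+1-1 = 2*a by omega,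
    Nat.factorial_succ a]
  have h1 := (factorial_cast_pos a).ne'
  have h2 := (factorial_cast_pos (2*a)).ne'
  push_cast
  field_simp
  ring
lemma cfn_one (r : ℕ) (hr : 1 ≤ r) : cfn r 1 = - Efn r 1 := by
  obtain ⟨a, rfl⟩ : ∃ a, r = a + 1 := ⟨r-1, by omega⟩
  unfold cfn Efn
  rw [if_neg one_ne_zero]
  rw [show 2*(a+1)+1-2 = 2*a+1 by omega, show (a+1)+1 = a+2 by omega,
    show 2*(a+1)+1-1 = (2*a+1)+1 by omega, Nat.factorial_succ (2*a+1)]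
  have h1 := (factorial_cast_pos (a+1)).ne'
  have h2 := (factorial_cast_pos (2*a+1)).ne'
  have h3 := (factorial_cast_pos (a+2)).ne'
  push_cast
  field_simp
  ring
lemma cfn_eq (r k : ℕ) (hr : 1 ≤ r) (hk : 2 ≤ k) :
    cfn r k = 2 * Efn r (k-1) - Efn r k := by
  obtain ⟨j, rfl⟩ : ∃ j, k = j + 2 := ⟨k-2, by omega⟩
  unfold cfn Efn
  rw [if_neg (by omega), if_neg (by omega)]
  rw [show (j+2)-1 = j+1 from rfl]
  rw [show 2*r+(j+2)-2 = 2*r+j by omega, show 2*r+(j+1)-1 = 2*r+j by omega,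
    show 2*r+(j+2)-1 = (2*r+j)+1 by omega, show r+(j+2) = (r+(j+1))+1 by omega,
    Nat.factorial_succ (2*r+j), Nat.factorial_succ (r+(j+1))]
  have h1 := (factorial_cast_pos r).ne'
  have h2 := (factorial_cast_pos (2*r+j)).ne'
  have h3 := (factorial_cast_pos (r+(j+1))).ne'
  push_cast
  field_simp
  ring
lemma Efn_sub_one_two (r : ℕ) (hr : 1 ≤ r) : Efn (r-1) 2 = Efn r 1 := by
  obtain ⟨a, rfl⟩ : ∃ a, r = a + 1 := ⟨r-1, by omega⟩
  unfold Efn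
  rw [if_neg (by omega), if_neg one_ne_zero]
  rw [show (a+1)-1 = a from rfl, show 2*a+2-1 = 2*a+1 by omega,
    show a+2 = a+2 from rfl, show 2*(a+1)+1-1 = (2*a+1)+1 by omega,
    show (a+1)+1 = a+2 by omega, Nat.factorial_succ (2*a+1), Nat.factorial_succ a]
  have h1 := (factorial_cast_pos a).ne'
  have h2 := (factorial_cast_pos (2*a+1)).ne'
  have h3 := (factorial_cast_pos (a+2)).ne'
  push_cast
  field_simp
  ring

-- the central convolution identity
lemma cfn_conv (r k : ℕ) (hr : 1 ≤ r) (hk : 1 ≤ k) :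
    cfn r k = Efn r 1 + ∑ m ∈ Finset.range r, Efn m 1 * cfn (r-m) (k-1) := by
  rcases Nat.lt_or_ge k 2 with hk2 | hk2
  · -- k = 1
    have hk1 : k = 1 := by omega
    subst hk1
    have hpt : ∀ m ∈ Finset.range r, Efn m 1 * cfn (r-m) 0
        = -2 * (Efn m 1 * Efn (r-1-m) 1) := by
      intro m hm
      rw [Finset.mem_range] at hm
      rw [cfn_zero (r-m) (by omega), show r-m-1 = r-1-m by omega]
      ring
    rw [Finset.sum_congr rfl hpt, ← Finset.mul_sum]
    have hconv := Efn_conv (r-1) 1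
    rw [show (r-1)+1 = r by omega] at hconv
    rw [hconv, Efn_sub_one_two r hr, cfn_one r hr]
    ring
  · -- k ≥ 2
    have hpt : ∀ m ∈ Finset.range r, Efn m 1 * cfn (r-m) (k-1)
        = 2 * (Efn m 1 * Efn (r-m) (k-2)) - Efn m 1 * Efn (r-m) (k-1) := by
      intro m hm
      rw [Finset.mem_range] at hm
      rcases Nat.lt_or_ge k 3 with hk3 | hk3
      · have : k = 2 := by omega
        subst this
        rw [cfn_one (r-m) (by omega)]
        rw [show (2:ℕ)-2 = 0 from rfl, show (2:ℕ)-1 = 1 from rfl,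
          Efn_zero_right (show r-m ≠ 0 by omega)]
        ring
      · rw [cfn_eq (r-m) (k-1) (by omega) (by omega), show k-1-1 = k-2 by omega]
        ring
    rw [Finset.sum_congr rfl hpt, Finset.sum_sub_distrib, ← Finset.mul_sum]
    -- partial sums via Efn_conv
    have hps : ∀ κ : ℕ, ∑ m ∈ Finset.range r, Efn m 1 * Efn (r-m) κ
        = Efn r (κ+1) - Efn r 1 := by
      intro κ
      have := Efn_conv r κ
      rw [Finset.sum_range_succ, Nat.sub_self, Efn_zero_left κ, mul_one] at this
      linarith
    rw [hps (k-2), hps (k-1)]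
    rw [show k-2+1 = k-1 by omega, show k-1+1 = k by omega]
    rw [cfn_eq r k hr hk2]
    ring

lemma star_identity (a : ℝ) (k : ℕ) (hk : 1 ≤ k) (J : ℕ) :
    ∑ m ∈ Finset.range (J+1),
        Efn m 1 * a^m * (1 + ∑ j ∈ Finset.Icc 1 (J-m), cfn j (k-1) * a^j)
      = 1 + ∑ r ∈ Finset.Icc 1 J, cfn r k * a^r := by
  induction J with
  | zero => simp [Efn_zero_left]
  | succ J IH =>
    rw [Finset.sum_range_succ, Nat.sub_self]
    have hpt : ∀ m ∈ Finset.range (J+1),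
        Efn m 1 * a^m * (1 + ∑ j ∈ Finset.Icc 1 (J+1-m), cfn j (k-1) * a^j)
          = Efn m 1 * a^m * (1 + ∑ j ∈ Finset.Icc 1 (J-m), cfn j (k-1) * a^j)
            + (Efn m 1 * cfn (J+1-m) (k-1)) * a^(J+1) := by
      intro m hm
      rw [Finset.mem_range] at hm
      rw [show J+1-m = (J-m)+1 by omega, Finset.sum_Icc_succ_top (by omega : 1 ≤ (J-m)+1)]
      have : a^m * a^((J-m)+1) = a^(J+1) := by
        rw [← pow_add]
        congr 1
        omega
      calc Efn m 1 * a^m * (1 + (∑ j ∈ Finset.Icc 1 (J-m), cfn j (k-1) * a^j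
              + cfn ((J-m)+1) (k-1) * a^((J-m)+1)))
          = Efn m 1 * a^m * (1 + ∑ j ∈ Finset.Icc 1 (J-m), cfn j (k-1) * a^j)
            + (Efn m 1 * cfn ((J-m)+1) (k-1)) * (a^m * a^((J-m)+1)) := by ring
        _ = _ := by rw [this, show (J-m)+1 = J+1-m by omega]
    rw [Finset.sum_congr rfl hpt, Finset.sum_add_distrib, IH, ← Finset.sum_mul]
    have hconv := cfn_conv (J+1) k (by omega) hk
    have hc : ∀ m ∈ Finset.range (J+1), Efn m 1 * cfn (J+1-m) (k-1)
        = Efn m 1 * cfn ((J+1)-m) (k-1) := fun m _ => rfl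
    rw [Finset.sum_Icc_succ_top (by omega : 1 ≤ J+1)]
    have : (∑ m ∈ Finset.range (J+1), Efn m 1 * cfn (J+1-m) (k-1))
        = cfn (J+1) k - Efn (J+1) 1 := by rw [hconv]; ring
    rw [this, show Finset.Icc 1 0 = (∅ : Finset ℕ) from Finset.Icc_eq_empty (by omega),
      Finset.sum_empty, add_zero]
    ring

lemma sum_Icc_even_vanish (f : ℕ → ℝ) (N : ℕ) (h : ∀ t, Odd t → f t = 0) :
    ∑ t ∈ Finset.Icc 1 (2*N), f t = ∑ m ∈ Finset.Icc 1 N, f (2*m) := by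
  induction N with
  | zero => simp
  | succ N IH =>
    rw [show 2*(N+1) = (2*N+1)+1 by omega, Finset.sum_Icc_succ_top (by omega),
      Finset.sum_Icc_succ_top (by omega), IH,
      Finset.sum_Icc_succ_top (by omega : 1 ≤ N+1)]
    rw [h (2*N+1) ⟨N, by omega⟩, show (2*N+1)+1 = 2*(N+1) by omega]
    ring

lemma A_eval (p : ℝ) : ∀ N k, walkProb p 0 (2*N) (fun S => localCount (2*N) S = k)
    = if k ≤ N then
        (2*(p*(1-p)))^k * (1 + ∑ m ∈ Finset.Icc 1 (N-k), cfn m k * (p*(1-p))^m)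
      else 0 := by
  intro N
  induction N using Nat.strong_induction_on with
  | _ N IH =>
  intro k
  rcases Nat.lt_or_ge N k with hNk | hNk
  · rw [if_neg (by omega)]
    refine walkProb_of_false (fun ε h => ?_)
    have h' : localCount (2*N) (walkFn 0 (extendF false ε)) = k := h
    have hle := localCount_le (2*N) (extendF false ε)
    rw [h'] at hle
    omega
  · rw [if_pos hNk]
    rcases Nat.eq_zero_or_pos k with rfl | hk
    · rw [A_rec_zero, sum_Icc_even_vanish _ N (fun t ht => R_odd p ht)]
      have hpt : ∀ m ∈ Finset.Icc 1 N, walkProb p 0 (2*m) (fzEvent (2*m))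
          = 2 * Efn (m-1) 1 * (p*(1-p))^m := by
        intro m hm
        rw [Finset.mem_Icc] at hm
        exact R_even p m hm.1
      rw [Finset.sum_congr rfl hpt, pow_zero, one_mul, Nat.sub_zero]
      have hneg : ∀ m ∈ Finset.Icc 1 N, cfn m 0 * (p*(1-p))^m
          = -(2 * Efn (m-1) 1 * (p*(1-p))^m) := by
        intro m hm
        rw [Finset.mem_Icc] at hm
        rw [cfn_zero m hm.1]
        ring
      rw [Finset.sum_congr rfl hneg, Finset.sum_neg_distrib]
      ring
    · rw [A_rec_pos p (2*N) k hk,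
        sum_Icc_even_vanish _ N (fun t ht => by rw [R_odd p ht, zero_mul])]
      have hpt : ∀ m ∈ Finset.Icc 1 N,
          walkProb p 0 (2*m) (fzEvent (2*m))
            * walkProb p 0 (2*N-2*m) (fun S => localCount (2*N-2*m) S = k-1)
          = 2 * Efn (m-1) 1 * (p*(1-p))^m
            * (if k-1 ≤ N-m then
                (2*(p*(1-p)))^(k-1)
                  * (1 + ∑ j ∈ Finset.Icc 1 ((N-m)-(k-1)), cfn j (k-1) * (p*(1-p))^j)
              else 0) := by
        intro m hm
        rw [Finset.mem_Icc] at hm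
        rw [R_even p m hm.1, show 2*N - 2*m = 2*(N-m) by omega, IH (N-m) (by omega) (k-1)]
      rw [Finset.sum_congr rfl hpt]
      set a := p*(1-p) with ha
      have hdrop : ∑ m ∈ Finset.Icc 1 N,
          (2 * Efn (m-1) 1 * a^m
            * (if k-1 ≤ N-m then
                (2*a)^(k-1) * (1 + ∑ j ∈ Finset.Icc 1 ((N-m)-(k-1)), cfn j (k-1) * a^j)
              else 0))
          = ∑ m ∈ Finset.Icc 1 (N-k+1),
            (2 * Efn (m-1) 1 * a^m
              * ((2*a)^(k-1) * (1 + ∑ j ∈ Finset.Icc 1 ((N-m)-(k-1)), cfn j (k-1) * a^j))) := by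
        rw [← Finset.sum_subset (Finset.Icc_subset_Icc_right (by omega : N-k+1 ≤ N))
          (fun m hm hnm => ?_)]
        · refine Finset.sum_congr rfl (fun m hm => ?_)
          rw [Finset.mem_Icc] at hm
          rw [if_pos (by omega)]
        · rw [Finset.mem_Icc] at hm hnm
          rw [if_neg (by omega), mul_zero]
      rw [hdrop, show Finset.Icc 1 (N-k+1) = Finset.Ico 1 (N-k+1+1) from
        (Finset.Ico_add_one_right_eq_Icc 1 (N-k+1)).symm, Finset.sum_Ico_eq_sum_range]
      rw [show N-k+1+1-1 = N-k+1 by omega]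
      have hfin : ∀ i ∈ Finset.range (N-k+1),
          2 * Efn (1+i-1) 1 * a^(1+i)
            * ((2*a)^(k-1) * (1 + ∑ j ∈ Finset.Icc 1 ((N-(1+i))-(k-1)), cfn j (k-1) * a^j))
          = (2*a)^k * (Efn i 1 * a^i * (1 + ∑ j ∈ Finset.Icc 1 ((N-k)-i), cfn j (k-1) * a^j)) := by
        intro i hi
        rw [Finset.mem_range] at hi
        rw [show 1+i-1 = i by omega, show (N-(1+i))-(k-1) = (N-k)-i by omega]
        rw [show (2*a)^k = (2*a)^(k-1) * (2*a) from by
          rw [← pow_succ, show k-1+1 = k by omega]]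
        rw [show a^(1+i) = a * a^i from by rw [pow_add, pow_one]]
        ring
      rw [Finset.sum_congr rfl hfin, ← Finset.mul_sum, star_identity a k hk (N-k)]

lemma localCount_congr_fn {S S' : ℕ → ℤ} {n : ℕ} (h : ∀ i, 1 ≤ i → i ≤ n → S i = S' i) :
    localCount n S = localCount n S' := by
  unfold localCount
  congr 1
  refine Finset.filter_congr (fun i hi => ?_)
  rw [Finset.mem_Icc] at hi
  rw [h i hi.1 hi.2]

lemma A_odd (p : ℝ) (n : ℕ) (hodd : Odd n) (k : ℕ) :
    walkProb p 0 n (fun S => localCount n S = k)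
      = walkProb p 0 (n-1) (fun S => localCount (n-1) S = k) := by
  have hn1 : 1 ≤ n := hodd.pos
  have step1 : walkProb p 0 n (fun S => localCount n S = k)
      = walkProb p 0 n (fun S => localCount (n-1) S = k) := by
    refine walkProb_congr' (fun ε => ?_)
    set S := walkFn 0 (extendF false ε) with hS
    have hzero : S n ≠ 0 := walkFn_ne_zero_of_odd _ hodd
    have : localCount n S = localCount (n-1) S := by
      unfold localCount
      congr 1
      ext i
      simp only [Finset.mem_filter, Finset.mem_Icc]
      constructor
      · rintro ⟨⟨h1, h2⟩, h0⟩
        refine ⟨⟨h1, ?_⟩, h0⟩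
        rcases Nat.lt_or_ge i n with h | h
        · omega
        · exact absurd h0 (by rw [show i = n by omega]; exact hzero)
      · rintro ⟨⟨h1, h2⟩, h0⟩
        exact ⟨⟨h1, by omega⟩, h0⟩
    rw [this]
  rw [step1]
  have hext := walkProb_extend p 0 (n-1) 1 (fun S => localCount (n-1) S = k)
    (fun ε ε' hag h => by
      have : localCount (n-1) (walkFn 0 ε) = localCount (n-1) (walkFn 0 ε') := by
        refine localCount_congr_fn (fun i hi1 hi2 => ?_)
        exact walkFn_congr (fun j hj => hag j (by omega))
      have h' : localCount (n-1) (walkFn 0 ε) = k := h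
      show localCount (n-1) (walkFn 0 ε') = k
      rw [← this]
      exact h')
  rw [show (n-1)+1 = n by omega] at hext
  exact hext


/-- Explicit distribution of the local time at `0`: for even `n` and `k ≤ n/2`,
`P_0{T_n=k} = (2pq)^k [1 + ∑_{m=1}^{n/2-k} ((2m+k-2)!/(m!(m+k)!)) (k²-k-2m) (pq)^m]`;
for odd `n`, `P_0{T_n=k} = P_0{T_{n-1}=k}`. -/
theorem stmt12 (p : ℝ) (hp : p ∈ Set.Ioo (0:ℝ) 1) (n k : ℕ) (hk : k ≤ n/2) :
    (Even n → walkProb p 0 n (fun S => localCount n S = k) =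
      (2*p*(1-p))^k * (1 + ∑ m ∈ Finset.Icc 1 (n/2 - k),
        ((2*m+k-2).factorial : ℝ)/((m.factorial : ℝ) * ((m+k).factorial : ℝ)) *
          ((k : ℝ)^2 - (k : ℝ) - 2*(m : ℝ)) * (p*(1-p))^m)) ∧
    (Odd n → walkProb p 0 n (fun S => localCount n S = k) =
      walkProb p 0 (n-1) (fun S => localCount (n-1) S = k)) := by
  constructor
  · intro heven
    have h2 : n % 2 = 0 := Nat.even_iff.1 heven
    have hn : n = 2*(n/2) := by omega
    rw [hn] at hk ⊢
    rw [show (2*(n/2))/2 = n/2 by omega] at hk ⊢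
    rw [A_eval p (n/2) k, if_pos hk,
      show (2:ℝ)*(p*(1-p)) = 2*p*(1-p) from (mul_assoc 2 p (1-p)).symm]
    rfl
  · intro hodd
    exact A_odd p n hodd k
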